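/- Let k be an algebraically closed field of characteristic zero, let r, s, l be positive integers with s·l ≤ r − 1, and let F₁, …, F_s be homogeneous polynomials of degree l in the variables x₀, …, x_r over k. Let p ∈ k^{r+1} be a nonzero vector with F_i(p) = 0 for all i. Then there exists q ∈ k^{r+1} such that p and q are linearly independent and F_i(a·p + b·q) = 0 for all scalars a, b ∈ k and all i = 1, …, s. -/

import Mathlib

open MvPolynomial

section FibersAux
set_option maxHeartbeats 1000000

lemma aux_eval_smul {k : Type*} [CommSemiring k] {σ : Type*} {φ : MvPolynomial σ k} {n : ℕ}
    (hφ : φ.IsHomogeneous n)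
    (t : k) (x : σ → k) : eval (t • x) φ = t ^ n * eval x φ := by
  rw [eval_eq, eval_eq, Finset.mul_sum]
  refine Finset.sum_congr rfl fun d hd => ?_
  have hdeg : ∑ i ∈ d.support, d i = n := by
    have := hφ (mem_support_iff.mp hd)
    simpa [Finsupp.weight_apply, Finsupp.sum, mul_comm] using this
  rw [← hdeg]
  simp only [Pi.smul_apply, smul_eq_mul, mul_pow]
  rw [Finset.prod_mul_distrib, Finset.prod_pow_eq_pow_sum]
  ring

lemma aux_totalDegree_aeval_le {k : Type*} [CommSemiring k] {σ τ : Type*}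
    {φ : MvPolynomial σ k} {l : ℕ} (hφ : φ.IsHomogeneous l)
    (g : σ → MvPolynomial τ k) (hg : ∀ j, (g j).totalDegree ≤ 1) :
    (aeval g φ).totalDegree ≤ l := by
  rw [φ.as_sum, map_sum]
  refine (totalDegree_finset_sum _ _).trans (Finset.sup_le fun d hd => ?_)
  rw [aeval_monomial]
  refine (totalDegree_mul _ _).trans ?_
  have h1 : (algebraMap k (MvPolynomial τ k)) (coeff d φ) = C (coeff d φ) := rfl
  rw [h1, totalDegree_C, zero_add]
  refine (totalDegree_finset_prod _ _).trans ?_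
  calc ∑ i ∈ d.support, ((g i) ^ d i).totalDegree
      ≤ ∑ i ∈ d.support, d i * 1 := Finset.sum_le_sum fun i _ =>
        (totalDegree_pow _ _).trans (Nat.mul_le_mul_left _ (hg i))
    _ = ∑ i ∈ d.support, d i := by simp
    _ = l := by
        have := hφ (mem_support_iff.mp hd)
        simpa [Finsupp.weight_apply, Finsupp.sum, mul_comm] using this


lemma aux_hom_decomp {k : Type*} [CommRing k] {σ : Type*} {ι : Type*} [Fintype ι] (G : ι → MvPolynomial σ k) (dg : ι → ℕ)
    (hG : ∀ j, (G j).IsHomogeneous (dg j)) {N : ℕ} (hN : ∀ j, dg j ≤ N)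
    {v : MvPolynomial σ k} (hv : v.IsHomogeneous N)
    (hmem : v ∈ Ideal.span (Set.range G)) :
    ∃ c : ι → MvPolynomial σ k, (∀ j, (c j).IsHomogeneous (N - dg j)) ∧
      v = ∑ j, c j * G j := by
  obtain ⟨f, hf⟩ := Ideal.mem_span_range_iff_exists_fun.mp hmem
  refine ⟨fun j => homogeneousComponent (N - dg j) (f j),
    fun j => homogeneousComponent_isHomogeneous _ _, ?_⟩
  have key : ∀ j, homogeneousComponent N (f j * G j)
      = homogeneousComponent (N - dg j) (f j) * G j := by
    intro j
    conv_lhs => rw [← sum_homogeneousComponent (f j), Finset.sum_mul, map_sum]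
    rw [Finset.sum_eq_single (N - dg j)]
    · rw [homogeneousComponent_of_mem
        (((homogeneousComponent_isHomogeneous _ (f j)).mul (hG j)))]
      rw [if_pos (by have := hN j; omega)]
    · intro c _ hc
      rw [homogeneousComponent_of_mem
        (((homogeneousComponent_isHomogeneous c (f j)).mul (hG j)))]
      rw [if_neg (by have := hN j; omega)]
    · intro h
      have h0 : homogeneousComponent (N - dg j) (f j) = 0 :=
        homogeneousComponent_eq_zero _ _ (by simp at h; omega)
      rw [h0, zero_mul, map_zero]
  calc v = homogeneousComponent N v := by
        rw [homogeneousComponent_of_mem ((mem_homogeneousSubmodule _ _).mpr hv), if_pos rfl]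
    _ = ∑ j, homogeneousComponent N (f j * G j) := by rw [← hf, map_sum]
    _ = ∑ j, homogeneousComponent (N - dg j) (f j) * G j := by
        exact Finset.sum_congr rfl fun j _ => key j

section SpanSec

variable {k : Type*} [Field k] {m : ℕ} {ι : Type*} [Fintype ι] [DecidableEq ι]

lemma aux_degree_eq_sum (δ : Fin m →₀ ℕ) : δ.degree = ∑ a, δ a :=
  Finset.sum_subset (Finset.subset_univ _) fun x _ hx => Finsupp.notMem_support_iff.mp hx

lemma aux_support_deg {φ : MvPolynomial (Fin m) k} {n : ℕ} (hφ : φ.IsHomogeneous n)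
    {γ : Fin m →₀ ℕ} (hγ : γ ∈ φ.support) : ∑ i, γ i = n := by
  have h1 : ∑ i ∈ γ.support, γ i = n := by
    have := hφ (mem_support_iff.mp hγ)
    simpa [Finsupp.weight_apply, Finsupp.sum, mul_comm] using this
  rw [← h1]
  exact (aux_degree_eq_sum γ).symm

lemma aux_mul_span {S T : Set (MvPolynomial (Fin m) k)} {h g : MvPolynomial (Fin m) k}
    (hh : h ∈ Submodule.span k S) (hST : ∀ x ∈ S, x * g ∈ T) :
    h * g ∈ Submodule.span k T := by
  induction hh using Submodule.span_induction with
  | mem x hx => exact Submodule.subset_span (hST x hx)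
  | zero => rw [zero_mul]; exact Submodule.zero_mem _
  | add x y _ _ hx hy => rw [add_mul]; exact Submodule.add_mem _ hx hy
  | smul c x _ hx => rw [smul_mul_assoc]; exact Submodule.smul_mem _ _ hx

/-- The generating set at total degree `e`. -/
def GenSet (G : ι → MvPolynomial (Fin m) k) (dg : ι → ℕ) (M e : ℕ) :
    Set (MvPolynomial (Fin m) k) :=
  {P | ∃ (β : Fin m →₀ ℕ) (α : ι → ℕ), (∑ i, β i) ≤ M ∧
    (∑ i, β i) + (∑ j, α j * dg j) = e ∧ P = monomial β 1 * ∏ j, G j ^ α j}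

lemma aux_spanning (G : ι → MvPolynomial (Fin m) k) (dg : ι → ℕ)
    (hG : ∀ j, (G j).IsHomogeneous (dg j)) (hdg : ∀ j, 1 ≤ dg j)
    {N : ℕ} (hN1 : 1 ≤ N) (hNdg : ∀ j, dg j ≤ N)
    (hpow : ∀ i : Fin m, ∃ c : ι → MvPolynomial (Fin m) k,
      (∀ j, (c j).IsHomogeneous (N - dg j)) ∧ X i ^ N = ∑ j, c j * G j) :
    ∀ e (γ : Fin m →₀ ℕ), (∑ i, γ i) = e →
      monomial γ 1 ∈ Submodule.span k (GenSet G dg (m * (N - 1)) e) := by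
  intro e
  induction e using Nat.strong_induction_on with
  | _ e IH =>
  intro γ hγ
  set M := m * (N - 1) with hM
  by_cases he : e ≤ M
  · refine Submodule.subset_span ⟨γ, 0, by omega, by simpa using hγ, by simp⟩
  · -- find a coordinate with γ i ≥ N
    have hex : ∃ i, N ≤ γ i := by
      by_contra hcon
      push_neg at hcon
      have : ∑ i, γ i ≤ ∑ _i : Fin m, (N - 1) :=
        Finset.sum_le_sum fun i _ => by have := hcon i; omega
      simp only [Finset.sum_const, Finset.card_univ, Fintype.card_fin, smul_eq_mul] at this
      omega
    obtain ⟨i, hi⟩ := hex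
    have heN : N ≤ e := by
      rw [← hγ]
      exact le_trans hi (Finset.single_le_sum (f := fun a => γ a)
        (fun _ _ => Nat.zero_le _) (Finset.mem_univ i))
    obtain ⟨c, hc, hXN⟩ := hpow i
    set δ : Fin m →₀ ℕ := γ - Finsupp.single i N with hδ
    have hγδ : δ + Finsupp.single i N = γ := by
      ext a
      rcases eq_or_ne a i with rfl | ha
      · simp only [hδ, Finsupp.add_apply, Finsupp.tsub_apply, Finsupp.single_eq_same]
        omega
      · simp [hδ, Finsupp.single_eq_of_ne' (Ne.symm ha)]
    have hδsum : (∑ a, δ a) = e - N := by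
      have h1 : ∑ a, γ a = ∑ a, (δ a + Finsupp.single i N a) := by rw [← hγδ]; rfl
      rw [Finset.sum_add_distrib] at h1
      have h2 : ∑ a, Finsupp.single i N a = N := by
        rw [Finset.sum_eq_single i]
        · simp
        · intro b _ hbi; exact Finsupp.single_eq_of_ne' (Ne.symm hbi)
        · intro h; exact absurd (Finset.mem_univ i) h
      omega
    have hmono : monomial γ 1 = ∑ j, (monomial δ 1 * c j) * G j := by
      rw [← hγδ, ← one_mul (1 : k), ← monomial_mul, ← X_pow_eq_monomial, hXN,
        Finset.mul_sum]
      exact Finset.sum_congr rfl fun j _ => by ring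
    rw [hmono]
    refine Submodule.sum_mem _ fun j _ => ?_
    have hhom : (monomial δ 1 * c j : MvPolynomial (Fin m) k).IsHomogeneous
        ((e - N) + (N - dg j)) := by
      refine IsHomogeneous.mul ?_ (hc j)
      exact isHomogeneous_monomial _ (by rw [aux_degree_eq_sum, hδsum])
    have hdeg_eq : (e - N) + (N - dg j) = e - dg j := by
      have := hNdg j; have := hdg j; omega
    rw [hdeg_eq] at hhom
    have hin : (monomial δ 1 * c j : MvPolynomial (Fin m) k)
        ∈ Submodule.span k (GenSet G dg M (e - dg j)) := by
      set h := monomial δ 1 * c j with hh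
      rw [(h : MvPolynomial (Fin m) k).as_sum]
      refine Submodule.sum_mem _ fun v hv => ?_
      have hrw : (monomial v) (coeff v h) = coeff v h • monomial v 1 := by
        rw [smul_monomial, smul_eq_mul, mul_one]
      rw [hrw]
      refine Submodule.smul_mem _ _ ?_
      exact IH (e - dg j) (by have := hdg j; omega) v (aux_support_deg hhom hv)
    refine aux_mul_span hin ?_
    rintro x ⟨β, α, hβ, hsum, rfl⟩
    refine ⟨β, (fun j' => α j' + (Pi.single j 1 : ι → ℕ) j'), hβ, ?_, ?_⟩
    · have h3 : ∑ j', (Pi.single j 1 : ι → ℕ) j' * dg j' = dg j := by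
        rw [Finset.sum_eq_single j]
        · simp
        · intro b _ hbj; simp [Pi.single_eq_of_ne hbj]
        · intro h; exact absurd (Finset.mem_univ j) h
      have h2 : ∑ j', (α j' + (Pi.single j 1 : ι → ℕ) j') * dg j'
          = (∑ j', α j' * dg j') + ∑ j', (Pi.single j 1 : ι → ℕ) j' * dg j' := by
        rw [← Finset.sum_add_distrib]
        exact Finset.sum_congr rfl fun j' _ => by ring
      rw [h2, h3]
      have := hdg j; have := hNdg j
      omega
    · have h5 : ∏ j', G j' ^ ((Pi.single j 1 : ι → ℕ) j') = G j := by
        rw [Finset.prod_eq_single j]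
        · simp
        · intro b _ hbj; simp [Pi.single_eq_of_ne hbj]
        · intro h; exact absurd (Finset.mem_univ j) h
      have h4 : ∏ j', G j' ^ (α j' + (Pi.single j 1 : ι → ℕ) j')
          = (∏ j', G j' ^ α j') * ∏ j', G j' ^ ((Pi.single j 1 : ι → ℕ) j') := by
        rw [← Finset.prod_mul_distrib]
        exact Finset.prod_congr rfl fun j' _ => by rw [pow_add]
      rw [h4, h5, mul_assoc]
lemma aux_le_sum {κ : Type*} [Fintype κ] (g : κ → ℕ) (i : κ) : g i ≤ ∑ a, g a :=
  Finset.single_le_sum (fun _ _ => Nat.zero_le _) (Finset.mem_univ i)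

lemma aux_common_zero [IsAlgClosed k] (hcard : Fintype.card ι < m)
    (G : ι → MvPolynomial (Fin m) k) (dg : ι → ℕ)
    (hdg : ∀ j, 1 ≤ dg j) (hG : ∀ j, (G j).IsHomogeneous (dg j)) :
    ∃ x : Fin m → k, x ≠ 0 ∧ ∀ j, eval x (G j) = 0 := by
  classical
  by_contra hcon
  push_neg at hcon
  set I : Ideal (MvPolynomial (Fin m) k) := Ideal.span (Set.range G) with hI
  have hzl : zeroLocus k I = {0} := by
    apply Set.eq_singleton_iff_unique_mem.mpr
    constructor
    · rw [mem_zeroLocus_iff]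
      intro p hp
      have hker : I ≤ RingHom.ker (eval (0 : Fin m → k)) := by
        rw [hI, Ideal.span_le]
        rintro _ ⟨j, rfl⟩
        have hc : coeff 0 (G j) = 0 := (hG j).coeff_eq_zero (by
          have := hdg j
          simp [Finsupp.degree]
          omega)
        simp [RingHom.mem_ker, eval_zero, constantCoeff_eq, hc]
      simpa [RingHom.mem_ker, MvPolynomial.coe_aeval_eq_eval] using hker hp
    · intro x hx
      by_contra hx0
      obtain ⟨j, hj⟩ := hcon x hx0
      exact hj (by simpa [MvPolynomial.coe_aeval_eq_eval] using (mem_zeroLocus_iff.mp hx) _ (Ideal.subset_span ⟨j, rfl⟩))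
  have hrad : ∀ i : Fin m, ∃ n : ℕ, X i ^ n ∈ I := by
    intro i
    have : (X i : MvPolynomial (Fin m) k) ∈ vanishingIdeal k (zeroLocus k I) := by
      rw [hzl]
      intro x hx
      rw [Set.mem_singleton_iff] at hx
      subst hx
      simp [eval_zero]
    rw [vanishingIdeal_zeroLocus_eq_radical] at this
    exact this
  choose nn hnn using hrad
  -- uniform exponent
  set N : ℕ := (∑ i, nn i) + Finset.univ.sup dg + 1 with hN
  have hN1 : 1 ≤ N := by omega
  have hNdg : ∀ j, dg j ≤ N := fun j => by
    have := Finset.le_sup (f := dg) (Finset.mem_univ j); omega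
  have hnnN : ∀ i, nn i ≤ N := fun i => by
    have := aux_le_sum nn i; omega
  have hpowI : ∀ i : Fin m, (X i : MvPolynomial (Fin m) k) ^ N ∈ I := by
    intro i
    have : (X i : MvPolynomial (Fin m) k) ^ N
        = X i ^ (N - nn i) * X i ^ nn i := by
      rw [← pow_add]; congr 1; have := hnnN i; omega
    rw [this]
    exact I.mul_mem_left _ (hnn i)
  have hpow : ∀ i : Fin m, ∃ c : ι → MvPolynomial (Fin m) k,
      (∀ j, (c j).IsHomogeneous (N - dg j)) ∧ X i ^ N = ∑ j, c j * G j := by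
    intro i
    refine aux_hom_decomp G dg hG hNdg ?_ (hpowI i)
    simpa using (isHomogeneous_X k i).pow N
  -- counting
  set M : ℕ := m * (N - 1) with hM
  set d : ℕ := (M + 1) ^ m * m ^ m with hd
  set gg : (Fin m → Fin (d+1)) → (Fin m →₀ ℕ) :=
    fun f => Finsupp.equivFunOnFinite.symm (fun i => (f i : ℕ)) with hgg
  have gg_inj : Function.Injective gg := by
    intro f f' h
    have h2 := Finsupp.equivFunOnFinite.symm.injective h
    funext i
    exact Fin.ext (congrFun h2 i)
  have hv_indep : LinearIndependent k (fun f => monomial (gg f) (1:k)) := by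
    have h3 := (basisMonomials (Fin m) k).linearIndependent.comp gg gg_inj
    rw [coe_basisMonomials] at h3
    exact h3
  set w : (Fin m → Fin (M+1)) × (ι → Fin (m*d+1)) → MvPolynomial (Fin m) k :=
    fun ba => monomial (Finsupp.equivFunOnFinite.symm (fun i => ((ba.1 i : ℕ)))) 1 *
      ∏ j, G j ^ (ba.2 j : ℕ) with hw
  have hmem : ∀ f, monomial (gg f) (1:k) ∈ Submodule.span k (Set.range w) := by
    intro f
    have he : (∑ i, gg f i) ≤ m * d := by
      calc ∑ i, gg f i ≤ ∑ _i : Fin m, d := Finset.sum_le_sum fun i _ => by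
            simpa [hgg, Finsupp.equivFunOnFinite] using Fin.is_le (f i)
        _ = m * d := by simp [Finset.sum_const, mul_comm]
    refine Submodule.span_mono ?_ (aux_spanning G dg hG hdg hN1 hNdg hpow (∑ i, gg f i) (gg f) rfl)
    rintro _ ⟨β, α, hβ, hsum, rfl⟩
    have hβi : ∀ i, β i < M + 1 := fun i => by
      have := aux_le_sum (fun a => β a) i
      omega
    have hαj : ∀ j, α j < m * d + 1 := fun j => by
      have h1 : α j ≤ α j * dg j := Nat.le_mul_of_pos_right _ (hdg j)
      have h2 : α j * dg j ≤ ∑ j', α j' * dg j' := aux_le_sum (fun j' => α j' * dg j') j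
      omega
    refine ⟨(fun i => ⟨β i, hβi i⟩, fun j => ⟨α j, hαj j⟩), ?_⟩
    have hfix : (Finsupp.equivFunOnFinite.symm
        (fun i => (((fun i => (⟨β i, hβi i⟩ : Fin (M+1))) i : Fin (M+1)) : ℕ))) = β :=
      Finsupp.equivFunOnFinite_symm_coe β
    simp only [hw, hfix]
  -- linear independence vs finite spanning set
  haveI : Module.Finite k ↥(Submodule.span k (Set.range w)) :=
    Module.Finite.span_of_finite k (Set.finite_range w)
  set v' : (Fin m → Fin (d+1)) → ↥(Submodule.span k (Set.range w)) :=
    fun f => ⟨monomial (gg f) 1, hmem f⟩ with hv'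
  have hv'_indep : LinearIndependent k v' := by
    apply LinearIndependent.of_comp (Submodule.span k (Set.range w)).subtype
    exact hv_indep
  have hcard1 : Fintype.card (Fin m → Fin (d+1))
      ≤ Module.finrank k ↥(Submodule.span k (Set.range w)) :=
    hv'_indep.fintype_card_le_finrank
  have hcard2 : Module.finrank k ↥(Submodule.span k (Set.range w))
      ≤ Fintype.card ((Fin m → Fin (M+1)) × (ι → Fin (m*d+1))) := by
    refine (finrank_span_le_card (Set.range w)).trans ?_
    rw [Set.toFinset_range]
    exact (Finset.card_image_le).trans (by simp)
  rw [Fintype.card_fun] at hcard1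
  rw [Fintype.card_prod, Fintype.card_fun, Fintype.card_fun] at hcard2
  simp only [Fintype.card_fin] at hcard1 hcard2
  -- numeric contradiction
  set n : ℕ := Fintype.card ι with hn
  have hm1 : 1 ≤ m := by omega
  have key : (d+1)^m ≤ (M+1)^m * (m*d+1)^n := le_trans hcard1 hcard2
  have h0 : m*d+1 ≤ m*(d+1) := by rw [Nat.mul_succ]; omega
  have h1 : (m*d+1)^n ≤ (m*(d+1))^n := Nat.pow_le_pow_left h0 n
  have h2 : (M+1)^m * (m*(d+1))^n = ((M+1)^m * m^n) * (d+1)^n := by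
    rw [mul_pow]; ring
  have h3 : (M+1)^m * m^n ≤ d := by
    rw [hd]
    exact Nat.mul_le_mul_left _ (Nat.pow_le_pow_right hm1 (le_of_lt hcard))
  have h4 : (d+1)^m ≥ (d+1)^(n+1) := Nat.pow_le_pow_right (by omega) (by omega)
  have h5 : (0:ℕ) < (d+1)^n := Nat.pow_pos (by omega)
  have h6 : (M+1)^m * (m*d+1)^n ≤ d * (d+1)^n := by
    calc (M+1)^m * (m*d+1)^n ≤ (M+1)^m * (m*(d+1))^n := Nat.mul_le_mul_left _ h1
      _ = ((M+1)^m * m^n) * (d+1)^n := h2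
      _ ≤ d * (d+1)^n := Nat.mul_le_mul_right _ h3
  have h8 : d * (d+1)^n < (d+1) * (d+1)^n :=
    mul_lt_mul_of_pos_right (by omega) h5
  have h9 : (d+1) * (d+1)^n = (d+1)^(n+1) := by rw [pow_succ, mul_comm]
  have hchain : (d+1)^m < (d+1)^m :=
    lt_of_le_of_lt (key.trans h6) (lt_of_lt_of_le (h9 ▸ h8) h4)
  exact absurd hchain (lt_irrefl _)

end SpanSec

variable {k : Type*} [Field k]

lemma aux_aeval_eq_eval {τ : Type*} (x : τ → k) (ψ : MvPolynomial τ k) :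
    MvPolynomial.aeval x ψ = eval x ψ :=
  DFunLike.congr_fun (MvPolynomial.coe_aeval_eq_eval (f := x)) ψ

lemma aux_eval_aeval {σ τ : Type*} (x : τ → k) (g : σ → MvPolynomial τ k)
    (φ : MvPolynomial σ k) :
    eval x (aeval g φ) = eval (fun j => eval x (g j)) φ := by
  have h2 := DFunLike.congr_fun (MvPolynomial.comp_aeval
    (φ := (MvPolynomial.aeval x : MvPolynomial τ k →ₐ[k] k)) (f := g)) φ
  simp only [AlgHom.coe_comp, Function.comp_apply] at h2
  rw [aux_aeval_eq_eval] at h2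
  rw [h2]
  have : (fun i => MvPolynomial.aeval x (g i)) = fun j => eval x (g j) := by
    funext j; exact aux_aeval_eq_eval x (g j)
  rw [this]
  exact aux_aeval_eq_eval _ _

lemma aux_polyeval_aeval {σ : Type*} (a : k) (g : σ → Polynomial k)
    (φ : MvPolynomial σ k) :
    Polynomial.eval a (MvPolynomial.aeval g φ) = eval (fun j => Polynomial.eval a (g j)) φ := by
  have hpa : ∀ q : Polynomial k, Polynomial.aeval a q = Polynomial.eval a q :=
    fun q => congrFun (Polynomial.coe_aeval_eq_eval a) q
  have h2 := DFunLike.congr_fun (MvPolynomial.comp_aeval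
    (φ := (Polynomial.aeval a : Polynomial k →ₐ[k] k)) (f := g)) φ
  simp only [AlgHom.coe_comp, Function.comp_apply] at h2
  rw [hpa] at h2
  rw [h2]
  have : (fun i => Polynomial.aeval a (g i)) = fun j => Polynomial.eval a (g j) := by
    funext j; exact hpa (g j)
  rw [this]
  exact aux_aeval_eq_eval _ _


end FibersAux

/-- Let `k` be an algebraically closed field of characteristic zero,
`r, s, l` positive integers with `s·l ≤ r − 1`, and `F₁, …, F_s` homogeneous polynomials
of degree `l` in `x₀, …, x_r` over `k`. If `p ∈ k^{r+1}` is a nonzero common zero of the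
`F_i`, then there is `q ∈ k^{r+1}` such that `p, q` are linearly independent and
`F_i(a·p + b·q) = 0` for all scalars `a, b ∈ k` and all `i`. -/
theorem fibers_stmt14 {k : Type*} [Field k] [IsAlgClosed k] [CharZero k]
    (r s l : ℕ) (hr : 0 < r) (hs : 0 < s) (hl : 0 < l) (hsl : s * l ≤ r - 1)
    (F : Fin s → MvPolynomial (Fin (r + 1)) k)
    (hF : ∀ i, (F i).IsHomogeneous l)
    (p : Fin (r + 1) → k) (hp : p ≠ 0)
    (hpF : ∀ i, MvPolynomial.eval p (F i) = 0) :
    ∃ q : Fin (r + 1) → k, LinearIndependent k ![p, q] ∧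
      ∀ a b : k, ∀ i, MvPolynomial.eval (a • p + b • q) (F i) = 0 := by
  classical
  obtain ⟨j₀, hj₀⟩ := Function.ne_iff.mp hp
  rw [Pi.zero_apply] at hj₀
  set Φ : Fin s → MvPolynomial (Fin (r + 1)) k :=
    fun i => aeval (fun j => C (p j) + X j) (F i) with hΦ
  have hΦdeg : ∀ i, (Φ i).totalDegree ≤ l := fun i =>
    aux_totalDegree_aeval_le (hF i) _ (fun j =>
      (totalDegree_add _ _).trans (by simp [totalDegree_C, totalDegree_X]))
  have hΦeval : ∀ (i) (x : Fin (r+1) → k), eval x (Φ i) = eval (p + x) (F i) := by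
    intro i x
    rw [hΦ, aux_eval_aeval]
    have harg : (fun j => eval x (C (p j) + X j)) = p + x := by
      funext j; simp
    rw [harg]
  -- the family of forms
  set G : (Fin s × Fin l) ⊕ Unit → MvPolynomial (Fin (r + 1)) k :=
    Sum.elim (fun ic => homogeneousComponent ((ic.2 : ℕ) + 1) (Φ ic.1)) (fun _ => X j₀)
    with hG'
  set dg : (Fin s × Fin l) ⊕ Unit → ℕ := Sum.elim (fun ic => (ic.2 : ℕ) + 1) (fun _ => 1)
    with hdg'
  have hcard : Fintype.card ((Fin s × Fin l) ⊕ Unit) < r + 1 := by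
    simp only [Fintype.card_sum, Fintype.card_prod, Fintype.card_fin, Fintype.card_unit]
    omega
  obtain ⟨q, hq0, hqz⟩ := aux_common_zero hcard G dg
    (by rintro (⟨i, c⟩ | u) <;> simp [hdg'])
    (by
      rintro (⟨i, c⟩ | u)
      · exact homogeneousComponent_isHomogeneous _ _
      · exact isHomogeneous_X _ _)
  have hqj₀ : q j₀ = 0 := by
    have := hqz (Sum.inr ())
    simpa [hG'] using this
  refine ⟨q, ?_, ?_⟩
  · rw [LinearIndependent.pair_iff]
    intro a b hab
    have h1 := congrFun hab j₀
    simp only [Pi.add_apply, Pi.smul_apply, smul_eq_mul, hqj₀, mul_zero, add_zero,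
      Pi.zero_apply] at h1
    have ha : a = 0 := by
      rcases mul_eq_zero.mp h1 with h | h
      · exact h
      · exact absurd h hj₀
    subst ha
    refine ⟨rfl, ?_⟩
    rw [zero_smul, zero_add] at hab
    by_contra hb
    exact hq0 (funext fun j => by
      have := congrFun hab j
      simp only [Pi.smul_apply, smul_eq_mul, Pi.zero_apply] at this
      rcases mul_eq_zero.mp this with h | h
      · exact absurd h hb
      · simpa using h)
  · -- evaluation vanishing
    have step1 : ∀ (t : k) (i), eval (p + t • q) (F i) = 0 := by
      intro t i
      rw [← hΦeval]
      conv_lhs => rw [← sum_homogeneousComponent (Φ i), map_sum]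
      refine Finset.sum_eq_zero fun c hc => ?_
      rw [aux_eval_smul (homogeneousComponent_isHomogeneous c (Φ i)) t q]
      rcases c with _ | c'
      · rw [homogeneousComponent_zero]
        have h0 : coeff 0 (Φ i) = 0 := by
          have h00 : eval (0 : Fin (r+1) → k) (Φ i) = coeff 0 (Φ i) := by
            rw [eval_zero]; rfl
          rw [← h00, hΦeval, add_zero, hpF i]
        rw [h0]
        simp
      · have hc' : c' < l := by
          have := Finset.mem_range.mp hc
          have := hΦdeg i
          omega
        have := hqz (Sum.inl (i, ⟨c', hc'⟩))
        simp only [hG', Sum.elim_inl] at this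
        rw [this, mul_zero]
    have step2 : ∀ (a b : k), a ≠ 0 → ∀ i, eval (a • p + b • q) (F i) = 0 := by
      intro a b ha i
      have hrw : a • p + b • q = a • (p + (a⁻¹ * b) • q) := by
        funext j
        simp only [Pi.add_apply, Pi.smul_apply, smul_eq_mul]
        field_simp
      rw [hrw, aux_eval_smul (hF i) a _, step1 (a⁻¹ * b) i, mul_zero]
    intro a b i
    set χ : Polynomial k := MvPolynomial.aeval
      (fun j => Polynomial.C (b * q j) + Polynomial.X * Polynomial.C (p j)) (F i) with hχ
    have hev : ∀ t : k, Polynomial.eval t χ = eval (t • p + b • q) (F i) := by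
      intro t
      rw [hχ, aux_polyeval_aeval]
      have harg : (fun j => Polynomial.eval t
          (Polynomial.C (b * q j) + Polynomial.X * Polynomial.C (p j))) = t • p + b • q := by
        funext j
        simp only [Polynomial.eval_add, Polynomial.eval_C, Polynomial.eval_mul,
          Polynomial.eval_X, Pi.add_apply, Pi.smul_apply, smul_eq_mul]
        ring
      rw [harg]
    have hzero : χ = 0 := by
      apply Polynomial.eq_zero_of_infinite_isRoot
      apply Set.Infinite.mono (s := {x : k | x ≠ 0})
      · intro x hx
        simp only [Set.mem_setOf_eq, Polynomial.IsRoot.def]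
        rw [hev x]
        exact step2 x b hx i
      · have : ({x : k | x ≠ 0} : Set k) = {(0:k)}ᶜ := by ext x; simp
        rw [this]
        exact Set.Finite.infinite_compl (Set.finite_singleton 0)
    have := hev a
    rw [hzero] at this
    simp only [Polynomial.eval_zero] at this
    exact this.symm
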